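/- Let ℓ, m ∈ ℤ with ℓ + 2 < m, let I = {ℓ, ℓ+1, …, m} and Ĩ = [ℓ+1, m−1]. If f : Ω → ℝ satisfies f(t) ∈ Ĩ for all t ∈ Ω, then there exists g : Ω → ℤ with g(t) ∈ I for all t ∈ Ω such that |Hf[0,1] − Hg[0,1]| ≤ 2^{−N−1}, |Hf[k,j] − Hg[k,j]| ≤ 2^{−N+(k−1)/2} for all (k,j) ∈ Ω̂ with k ≥ 1, and sup_{t∈Ω} |f(t) − g(t)| ≤ 1 − 2^{−N−1}. -/

import Mathlib

/-!
Round top-down along the dyadic tree of block sums of `f`: the total sum is rounded to an integer,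
and each node's integer is split between its two halves so that the difference of their integers
is the one of the right parity closest to the difference of their block sums. The Haar coefficient
`(k, j)` of `f - g` is `2^{-N} 2^{(k-1)/2}` times the difference of the two half-block errors, which
this split keeps within `1`. The block errors obey `e_child ≤ e_parent / 2 + 1 / 2`, so
`e ≤ 1 - 2^{-(k+1)}` at depth `k`; at the leaves this is the sup bound, and being `< 1` it keeps `g`
in `{ℓ, …, m}`.
-/

open Finset Real

noncomputable section

/-- The time points `t[n] = -1/2 + (2n-1)/2^(N+1)` for `n = 1, …, 2^N`. -/
def tpt (N n : ℕ) : ℝ := -(1/2) + (2*(n:ℝ) - 1) / 2^(N+1)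

/-- The Haar index points `P[k,j] = -1/2 + (2j-1)/2^k`. -/
def Ppt (k j : ℕ) : ℝ := -(1/2) + (2*(j:ℝ) - 1) / 2^k

/-- The mother Haar function `Haar[1,1]`. -/
def haar11 (t : ℝ) : ℝ :=
  if 0 < t ∧ t < 1/2 then 1 else if -(1/2) < t ∧ t < 0 then -1 else 0

/-- The Haar functions: `haar 0 1 = 1` and
`haar k j t = 2^((k-1)/2) * haar11 (2^(k-1) (t - P[k,j]))` for `k ≥ 1`. -/
def haar (k j : ℕ) (t : ℝ) : ℝ :=
  if k = 0 then 1
  else (2:ℝ) ^ (((k:ℝ) - 1) / 2) * haar11 ((2:ℝ)^(k-1) * (t - Ppt k j))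

/-- The inner product `⟨f,g⟩ = 2^{-N} ∑_{n=1}^{2^N} f[n] g[n]`. -/
def innerOmega (N : ℕ) (f g : ℕ → ℝ) : ℝ :=
  (1 / 2^N) * ∑ n ∈ Finset.Icc 1 (2^N), f n * g n

/-- The Haar transform `Hf[k,j] = ⟨Haar[k,j], f⟩`. -/
def Htrans (N : ℕ) (f : ℕ → ℝ) (k j : ℕ) : ℝ :=
  innerOmega N (fun n => haar k j (tpt N n)) f

/-- The discrete Fourier transform `Ff[ξ] = 2^{-N} ∑_{n=1}^{2^N} e^{-2πi t[n] ξ} f[n]`. -/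
def Ftrans (N : ℕ) (f : ℕ → ℝ) (ξ : ℤ) : ℂ :=
  (1 / 2^N : ℂ) * ∑ n ∈ Finset.Icc 1 (2^N),
    Complex.exp (-(2 * (Real.pi : ℂ) * Complex.I) * (tpt N n : ℂ) * (ξ : ℂ)) * (f n : ℂ)

/-- The left share `r` of a split `q = r + (q - r)` whose difference `(q - r) - r` is as close to
`b - a` as the parity of `q` allows. -/
def splitRound (q : ℤ) (a b : ℝ) : ℤ := round (((q : ℝ) - (b - a)) / 2)

section splitRound

variable (q : ℤ) (a b : ℝ)

lemma abs_splitRound_sub_le :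
    |(splitRound q a b : ℝ) - a| ≤ |(q : ℝ) - (a + b)| / 2 + 1 / 2 := by
  have hr := abs_le.mp (abs_sub_round (((q : ℝ) - (b - a)) / 2))
  rw [splitRound, abs_le]
  constructor <;> linarith [le_abs_self ((q : ℝ) - (a + b)), neg_abs_le ((q : ℝ) - (a + b))]

lemma abs_sub_splitRound_sub_le :
    |((q : ℝ) - splitRound q a b) - b| ≤ |(q : ℝ) - (a + b)| / 2 + 1 / 2 := by
  have hr := abs_le.mp (abs_sub_round (((q : ℝ) - (b - a)) / 2))
  rw [splitRound, abs_le]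
  constructor <;> linarith [le_abs_self ((q : ℝ) - (a + b)), neg_abs_le ((q : ℝ) - (a + b))]

lemma abs_sub_sub_splitRound_le :
    |(b - ((q : ℝ) - splitRound q a b)) - (a - splitRound q a b)| ≤ 1 := by
  have hr := abs_le.mp (abs_sub_round (((q : ℝ) - (b - a)) / 2))
  rw [splitRound, abs_le]
  constructor <;> linarith

end splitRound

def treeRound (S : ℕ → ℕ → ℝ) : ℕ → ℕ → ℤ
  | 0, i => round (S 0 i)
  | k + 1, i =>
    let r := splitRound (treeRound S k (i / 2)) (S (k + 1) (2 * (i / 2)))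
      (S (k + 1) (2 * (i / 2) + 1))
    if i % 2 = 0 then r else treeRound S k (i / 2) - r

section treeRound

variable (S : ℕ → ℕ → ℝ)

lemma treeRound_two_mul (k i : ℕ) :
    treeRound S (k + 1) (2 * i) =
      splitRound (treeRound S k i) (S (k + 1) (2 * i)) (S (k + 1) (2 * i + 1)) := by
  simp [treeRound]

lemma treeRound_two_mul_add_one (k i : ℕ) :
    treeRound S (k + 1) (2 * i + 1) =
      treeRound S k i -
        splitRound (treeRound S k i) (S (k + 1) (2 * i)) (S (k + 1) (2 * i + 1)) := by
  have hdiv : (2 * i + 1) / 2 = i := by omega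
  simp [treeRound, hdiv]

lemma treeRound_eq_add (k i : ℕ) :
    treeRound S k i = treeRound S (k + 1) (2 * i) + treeRound S (k + 1) (2 * i + 1) := by
  rw [treeRound_two_mul, treeRound_two_mul_add_one]
  ring

lemma abs_treeRound_sub_le {K : ℕ}
    (hS : ∀ k < K, ∀ i, S k i = S (k + 1) (2 * i) + S (k + 1) (2 * i + 1)) :
    ∀ k ≤ K, ∀ i, |(treeRound S k i : ℝ) - S k i| ≤ 1 - 1 / 2 ^ (k + 1) := by
  intro k
  induction k with
  | zero =>
    intro _ i
    rw [abs_sub_comm]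
    norm_num [treeRound, abs_sub_round]
  | succ k ih =>
    intro hk i
    have hparent : |(treeRound S k (i / 2) : ℝ) - (S (k + 1) (2 * (i / 2)) +
        S (k + 1) (2 * (i / 2) + 1))| ≤ 1 - 1 / 2 ^ (k + 1) := by
      rw [← hS k (by omega)]
      exact ih (by omega) _
    have hpow : (1 : ℝ) / 2 ^ (k + 1 + 1) = 1 / 2 ^ (k + 1) / 2 := by ring
    obtain ⟨p, rfl | rfl⟩ := Nat.even_or_odd' i
    · rw [treeRound_two_mul]
      have := abs_splitRound_sub_le (treeRound S k p) (S (k + 1) (2 * p)) (S (k + 1) (2 * p + 1))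
      simp only [show 2 * p / 2 = p by omega] at hparent
      linarith
    · rw [treeRound_two_mul_add_one, Int.cast_sub]
      have := abs_sub_splitRound_sub_le (treeRound S k p) (S (k + 1) (2 * p))
        (S (k + 1) (2 * p + 1))
      simp only [show (2 * p + 1) / 2 = p by omega] at hparent
      linarith

lemma abs_treeRound_sub_sub_le (k i : ℕ) :
    |(S (k + 1) (2 * i + 1) - treeRound S (k + 1) (2 * i + 1)) -
      (S (k + 1) (2 * i) - treeRound S (k + 1) (2 * i))| ≤ 1 := by
  rw [treeRound_two_mul, treeRound_two_mul_add_one, Int.cast_sub]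
  exact abs_sub_sub_splitRound_le _ _ _

end treeRound

/-- Blocks are counted from `0`, samples from `1`. -/
def dyadicSum (e : ℕ → ℝ) (d i : ℕ) : ℝ := ∑ n ∈ Ioc (i * 2 ^ d) ((i + 1) * 2 ^ d), e n

section dyadicSum

variable (e : ℕ → ℝ)

lemma dyadicSum_zero (i : ℕ) : dyadicSum e 0 i = e (i + 1) := by
  simp [dyadicSum, Nat.Ioc_succ_singleton]

lemma dyadicSum_succ (d i : ℕ) :
    dyadicSum e (d + 1) i = dyadicSum e d (2 * i) + dyadicSum e d (2 * i + 1) := by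
  have h₁ : 2 * i * 2 ^ d ≤ (2 * i + 1) * 2 ^ d := Nat.mul_le_mul_right _ (by omega)
  have h₂ : (2 * i + 1) * 2 ^ d ≤ (2 * i + 1 + 1) * 2 ^ d := Nat.mul_le_mul_right _ (by omega)
  rw [dyadicSum, dyadicSum, dyadicSum, Finset.sum_Ioc_consecutive _ h₁ h₂]
  congr 2 <;> ring

lemma dyadicSum_eq_of_eq_add {N : ℕ} (Q : ℕ → ℕ → ℝ)
    (hQ : ∀ k i, Q k i = Q (k + 1) (2 * i) + Q (k + 1) (2 * i + 1)) :
    ∀ k ≤ N, ∀ i, dyadicSum (fun n => Q N (n - 1)) (N - k) i = Q k i := by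
  intro k hk
  obtain ⟨d, rfl⟩ : ∃ d, N = k + d := ⟨N - k, by omega⟩
  rw [Nat.add_sub_cancel_left]
  induction d generalizing k with
  | zero => simp [dyadicSum_zero]
  | succ d ih =>
    intro i
    rw [dyadicSum_succ, hQ k i, ← ih (k + 1) (by omega), ← ih (k + 1) (by omega)]
    simp only [show k + 1 + d = k + (d + 1) by omega]

end dyadicSum

lemma haar11_intCast_div (n L a : ℕ) (ha : 0 < a) :
    haar11 (((2 * n - 1 - 2 * L - 2 * a : ℤ) : ℝ) / (4 * a)) =
      (if n ∈ Ioc (L + a) (L + 2 * a) then 1 else 0) - (if n ∈ Ioc L (L + a) then 1 else 0) := by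
  have h4a : (0 : ℝ) < 4 * a := by positivity
  set z : ℤ := 2 * n - 1 - 2 * L - 2 * a
  have hpos : 0 < (z : ℝ) / (4 * a) ↔ L + a < n := by
    rw [div_pos_iff_of_pos_right h4a, Int.cast_pos]; omega
  have hneg : (z : ℝ) / (4 * a) < 0 ↔ n ≤ L + a := by
    rw [div_lt_iff₀ h4a, zero_mul, Int.cast_lt_zero]; omega
  have hlt : (z : ℝ) / (4 * a) < 1 / 2 ↔ n ≤ L + 2 * a := by
    rw [div_lt_iff₀ h4a, show (1 / 2 : ℝ) * (4 * a) = ((2 * a : ℤ) : ℝ) by push_cast; ring,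
      Int.cast_lt]
    omega
  have hgt : -(1 / 2) < (z : ℝ) / (4 * a) ↔ L < n := by
    rw [lt_div_iff₀ h4a, show -(1 / 2 : ℝ) * (4 * a) = ((-(2 * a) : ℤ) : ℝ) by push_cast; ring,
      Int.cast_lt]
    omega
  simp only [haar11, hpos, hneg, hlt, hgt, Finset.mem_Ioc]
  split_ifs <;> first | omega | norm_num

lemma haar_succ_tpt (d k b n : ℕ) :
    haar (k + 1) (b + 1) (tpt (k + 1 + d) n) = 2 ^ ((k : ℝ) / 2) *
      ((if n ∈ Ioc ((2 * b + 1) * 2 ^ d) ((2 * b + 1 + 1) * 2 ^ d) then 1 else 0) -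
        (if n ∈ Ioc (2 * b * 2 ^ d) ((2 * b + 1) * 2 ^ d) then 1 else 0)) := by
  set L := 2 * b * 2 ^ d with hL
  set a := 2 ^ d with ha
  have hscale : (2 : ℝ) ^ k * (tpt (k + 1 + d) n - Ppt (k + 1) (b + 1)) =
      ((2 * n - 1 - 2 * L - 2 * a : ℤ) : ℝ) / (4 * a) := by
    simp only [tpt, Ppt, hL, ha]
    push_cast
    field_simp
    ring
  rw [haar, if_neg (Nat.succ_ne_zero k), Nat.add_sub_cancel, Nat.cast_add_one,
    add_sub_cancel_right, hscale, haar11_intCast_div _ _ _ (by positivity)]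
  congr 4 <;> rw [hL] <;> congr 1 <;> ring

lemma Htrans_sub (N : ℕ) (f g : ℕ → ℝ) (k j : ℕ) :
    Htrans N f k j - Htrans N g k j = Htrans N (fun n => f n - g n) k j := by
  simp only [Htrans, innerOmega, mul_sub, Finset.sum_sub_distrib]

lemma Htrans_zero_one (N : ℕ) (e : ℕ → ℝ) : Htrans N e 0 1 = 1 / 2 ^ N * dyadicSum e N 0 := by
  rw [dyadicSum, zero_mul, zero_add, one_mul, ← Finset.Icc_add_one_left_eq_Ioc]
  simp [Htrans, innerOmega, haar]

lemma Htrans_succ (N k b : ℕ) (e : ℕ → ℝ) (hk : k < N) (hb : b < 2 ^ k) :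
    Htrans N e (k + 1) (b + 1) = 1 / 2 ^ N * (2 ^ ((k : ℝ) / 2) *
      (dyadicSum e (N - (k + 1)) (2 * b + 1) - dyadicSum e (N - (k + 1)) (2 * b))) := by
  obtain ⟨d, rfl⟩ : ∃ d, N = k + 1 + d := ⟨N - (k + 1), by omega⟩
  have hblock : Ioc (2 * b * 2 ^ d) ((2 * b + 1 + 1) * 2 ^ d) ⊆ Icc 1 (2 ^ (k + 1 + d)) := by
    have : (2 * b + 1 + 1) * 2 ^ d ≤ 2 ^ (k + 1 + d) := by
      rw [pow_add, pow_succ]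
      nlinarith [pow_pos (two_pos : 0 < 2) d]
    intro n hn
    simp only [Finset.mem_Ioc, Finset.mem_Icc] at hn ⊢
    omega
  have hsub₁ := (Ioc_subset_Ioc_left
    (Nat.mul_le_mul_right (2 ^ d) (Nat.le_add_right (2 * b) 1))).trans hblock
  have hsub₂ := (Ioc_subset_Ioc_right
    (Nat.mul_le_mul_right (2 ^ d) (Nat.le_add_right (2 * b + 1) 1))).trans hblock
  have hterm : ∀ n, haar (k + 1) (b + 1) (tpt (k + 1 + d) n) * e n = 2 ^ ((k : ℝ) / 2) *
      ((if n ∈ Ioc ((2 * b + 1) * 2 ^ d) ((2 * b + 1 + 1) * 2 ^ d) then e n else 0) -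
        (if n ∈ Ioc (2 * b * 2 ^ d) ((2 * b + 1) * 2 ^ d) then e n else 0)) := by
    intro n
    rw [haar_succ_tpt]
    split_ifs <;> ring
  simp only [Htrans, innerOmega, hterm, dyadicSum, Nat.add_sub_cancel_left, ← Finset.mul_sum,
    Finset.sum_sub_distrib, Finset.sum_ite_mem, Finset.inter_eq_right.mpr hsub₁,
    Finset.inter_eq_right.mpr hsub₂]

lemma dyadicSum_sub (e e' : ℕ → ℝ) (d i : ℕ) :
    dyadicSum (fun n => e n - e' n) d i = dyadicSum e d i - dyadicSum e' d i :=
  Finset.sum_sub_distrib ..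

def blockTree (N : ℕ) (f : ℕ → ℝ) (k i : ℕ) : ℝ := dyadicSum f (N - k) i

def quantize (N : ℕ) (f : ℕ → ℝ) (n : ℕ) : ℤ := treeRound (blockTree N f) N (n - 1)

section quantize

variable (N : ℕ) (f : ℕ → ℝ)

lemma blockTree_eq_add {k : ℕ} (hk : k < N) (i : ℕ) :
    blockTree N f k i = blockTree N f (k + 1) (2 * i) + blockTree N f (k + 1) (2 * i + 1) := by
  rw [blockTree, show N - k = N - (k + 1) + 1 by omega, dyadicSum_succ]
  rfl

lemma dyadicSum_sub_quantize {k : ℕ} (hk : k ≤ N) (i : ℕ) :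
    dyadicSum (fun n => f n - quantize N f n) (N - k) i =
      blockTree N f k i - treeRound (blockTree N f) k i := by
  rw [dyadicSum_sub, blockTree]
  congr 1
  exact dyadicSum_eq_of_eq_add (fun k i => (treeRound (blockTree N f) k i : ℝ))
    (fun k i => by exact_mod_cast treeRound_eq_add (blockTree N f) k i) k hk i

lemma abs_blockTree_sub_treeRound_le {k : ℕ} (hk : k ≤ N) (i : ℕ) :
    |blockTree N f k i - treeRound (blockTree N f) k i| ≤ 1 - 1 / 2 ^ (k + 1) := by
  rw [abs_sub_comm]
  exact abs_treeRound_sub_le (blockTree N f) (fun _ hk' => blockTree_eq_add N f hk') k hk i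

lemma abs_sub_quantize_le {n : ℕ} (hn : 1 ≤ n) :
    |f n - quantize N f n| ≤ 1 - 1 / 2 ^ (N + 1) := by
  have h := dyadicSum_sub_quantize N f le_rfl (n - 1)
  rw [Nat.sub_self, dyadicSum_zero, Nat.sub_add_cancel hn] at h
  rw [h]
  exact abs_blockTree_sub_treeRound_le N f le_rfl _

lemma quantize_mem_Icc {l m : ℤ} {n : ℕ} (hn : 1 ≤ n)
    (hf : f n ∈ Set.Icc ((l : ℝ) + 1) ((m : ℝ) - 1)) : quantize N f n ∈ Set.Icc l m := by
  have hq := abs_le.1 (abs_sub_quantize_le N f hn)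
  have : (0 : ℝ) < 1 / 2 ^ (N + 1) := by positivity
  exact ⟨(Int.cast_le (R := ℝ)).1 (by linarith [hf.1]),
    (Int.cast_le (R := ℝ)).1 (by linarith [hf.2])⟩

lemma abs_Htrans_sub_quantize_zero_le :
    |Htrans N f 0 1 - Htrans N (fun n => quantize N f n) 0 1| ≤ 1 / 2 ^ (N + 1) := by
  have h := dyadicSum_sub_quantize N f (Nat.zero_le N) 0
  rw [Nat.sub_zero] at h
  rw [Htrans_sub, Htrans_zero_one, h, abs_mul, abs_of_pos (by positivity)]
  calc 1 / 2 ^ N * |blockTree N f 0 0 - treeRound (blockTree N f) 0 0|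
      ≤ 1 / 2 ^ N * (1 - 1 / 2 ^ (0 + 1)) := by
        gcongr
        exact abs_blockTree_sub_treeRound_le N f (Nat.zero_le N) 0
    _ = 1 / 2 ^ (N + 1) := by rw [pow_succ]; ring

lemma abs_Htrans_sub_quantize_succ_le {k b : ℕ} (hk : k < N) (hb : b < 2 ^ k) :
    |Htrans N f (k + 1) (b + 1) - Htrans N (fun n => quantize N f n) (k + 1) (b + 1)| ≤
      1 / 2 ^ N * 2 ^ ((k : ℝ) / 2) := by
  rw [Htrans_sub, Htrans_succ N k b _ hk hb, dyadicSum_sub_quantize N f hk,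
    dyadicSum_sub_quantize N f hk, abs_mul, abs_mul, abs_of_pos (by positivity),
    abs_of_pos (by positivity)]
  have h := abs_treeRound_sub_sub_le (blockTree N f) k b
  gcongr
  simpa using mul_le_mul_of_nonneg_left h (by positivity : (0 : ℝ) ≤ 2 ^ ((k : ℝ) / 2))

end quantize

theorem finite_value_quantization_general (N : ℕ) (l m : ℤ) (f : ℕ → ℝ)
    (hf : ∀ n ∈ Finset.Icc 1 (2^N), f n ∈ Set.Icc ((l:ℝ) + 1) ((m:ℝ) - 1)) :
    ∃ g : ℕ → ℤ,
      (∀ n ∈ Finset.Icc 1 (2^N), g n ∈ Set.Icc l m) ∧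
      |Htrans N f 0 1 - Htrans N (fun n => (g n : ℝ)) 0 1| ≤ (2:ℝ) ^ (-(N:ℝ) - 1) ∧
      (∀ k j : ℕ, 1 ≤ k → k ≤ N → 1 ≤ j → j ≤ 2^(k-1) →
        |Htrans N f k j - Htrans N (fun n => (g n : ℝ)) k j| ≤
          (2:ℝ) ^ (-(N:ℝ) + ((k:ℝ) - 1) / 2)) ∧
      (∀ n ∈ Finset.Icc 1 (2^N), |f n - (g n : ℝ)| ≤ 1 - (2:ℝ) ^ (-(N:ℝ) - 1)) := by
  have hpow : (2 : ℝ) ^ (-(N : ℝ) - 1) = 1 / 2 ^ (N + 1) := by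
    rw [← Real.rpow_natCast, one_div, ← Real.rpow_neg zero_le_two]
    push_cast
    ring_nf
  refine ⟨quantize N f, fun n hn => quantize_mem_Icc N f (mem_Icc.1 hn).1 (hf n hn),
    hpow ▸ abs_Htrans_sub_quantize_zero_le N f, fun k j hk hkN hj hjk => ?_,
    fun n hn => hpow ▸ abs_sub_quantize_le N f (mem_Icc.1 hn).1⟩
  obtain ⟨k, rfl⟩ : ∃ k', k = k' + 1 := ⟨k - 1, by omega⟩
  obtain ⟨b, rfl⟩ : ∃ b, j = b + 1 := ⟨j - 1, by omega⟩
  rw [Nat.cast_add_one, add_sub_cancel_right, Real.rpow_add two_pos, Real.rpow_neg zero_le_two,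
    Real.rpow_natCast, ← one_div]
  exact abs_Htrans_sub_quantize_succ_le N f hkN (by simpa using hjk)

/-- **Corollary (finite-value quantization).** If `ℓ + 2 < m` and `f` takes values in
`Ĩ = [ℓ+1, m−1]`, then the quantization `g` can be taken with values in `I = {ℓ, …, m}`. -/
theorem finite_value_quantization (N : ℕ) (l m : ℤ) (hlm : l + 2 < m) (f : ℕ → ℝ)
    (hf : ∀ n ∈ Finset.Icc 1 (2^N), f n ∈ Set.Icc ((l:ℝ) + 1) ((m:ℝ) - 1)) :
    ∃ g : ℕ → ℤ,
      (∀ n ∈ Finset.Icc 1 (2^N), g n ∈ Set.Icc l m) ∧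
      |Htrans N f 0 1 - Htrans N (fun n => (g n : ℝ)) 0 1| ≤ (2:ℝ) ^ (-(N:ℝ) - 1) ∧
      (∀ k j : ℕ, 1 ≤ k → k ≤ N → 1 ≤ j → j ≤ 2^(k-1) →
        |Htrans N f k j - Htrans N (fun n => (g n : ℝ)) k j| ≤
          (2:ℝ) ^ (-(N:ℝ) + ((k:ℝ) - 1) / 2)) ∧
      (∀ n ∈ Finset.Icc 1 (2^N), |f n - (g n : ℝ)| ≤ 1 - (2:ℝ) ^ (-(N:ℝ) - 1)) :=
  finite_value_quantization_general N l m f hf
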